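/- Let d ≥ 1 and n ≥ 1 be integers, let v ∈ ℤ^d have every entry coprime to n, and let δ ∈ ℤ^d. Then (1/n²)·Σ_{x ∈ L(n,v,δ)} Σ_{y ∈ L(n,v,δ)} Π_{k=1}^d (1.25 + w(x_k − y_k + 1/2)²) = (1/n)·Σ_{i=1}^{n} Π_{k=1}^d (1.25 + w(i·v_k/n − 1/2)²); consequently the squared wrap-around discrepancy satisfies c_WD(L(n,v,δ))² = (1/n)·Σ_{i=1}^{n} Π_{k=1}^d (1.25 + w(i·v_k/n − 1/2)²) − (4/3)^d. -/

import Mathlib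

/-!
The `n` points of `L(n, v, δ)` are indexed by `a ∈ ℤ/nℤ`, the `k`-th coordinate of the `a`-th point
being `((a v_k + δ_k) mod n + 1/2) / n`; the indexing is injective because some `v_k` is a unit
mod `n`. Since `w` is `1`-periodic, the kernel of a pair of points `(a, b)` depends only on
`a - b`, so each of the `n` rows of the double sum is the same sum over `ℤ/nℤ`, which is also the
sum over `i = 1, …, n`.
-/

open Finset

/-- Distance from a real number to the nearest integer: w(t) = min over z in ZZ of |t - z|. -/
noncomputable def nid (t : ℝ) : ℝ := ⨅ z : ℤ, |t - (z : ℝ)|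

/-- Wrap-around distance on ℝ^d. -/
noncomputable def wdist {d : ℕ} (u : Fin d → ℝ) : ℝ := Real.sqrt (∑ k, nid (u k) ^ 2)

/-- Lattice-based Latin hypercube design
L(n,v,δ) = { z + i·v/n + δ/n + 1_d/(2n) : z ∈ ℤ^d, i ∈ ℤ } ∩ [0,1]^d. -/
def LHDset (d n : ℕ) (v : Fin d → ℤ) (δ : Fin d → ℝ) : Set (Fin d → ℝ) :=
  {x | (∃ (z : Fin d → ℤ) (i : ℤ),
          x = fun k => (z k : ℝ) + (i : ℝ) * (v k : ℝ) / n + δ k / n + 1 / (2 * n)) ∧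
       ∀ k, x k ∈ Set.Icc (0 : ℝ) 1}

lemma nid_add_intCast (t : ℝ) (z : ℤ) : nid (t + z) = nid t := by
  unfold nid
  rw [← (Equiv.addRight z).iInf_comp]
  congr 1 with w
  push_cast [Equiv.coe_addRight]
  congr 1
  ring

lemma nid_div_add_congr {n : ℕ} {p q : ℤ} (h : (p : ZMod n) = q) (t : ℝ) :
    nid (p / n + t) = nid (q / n + t) := by
  obtain ⟨c, hc⟩ := (ZMod.intCast_eq_intCast_iff_dvd_sub p q n).1 h
  rcases eq_or_ne (n : ℝ) 0 with hn | hn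
  · simp [hn]
  · have hq : (q : ℝ) = p + n * c := by exact_mod_cast (by linarith : q = p + n * c)
    rw [← nid_add_intCast (p / n + t) c, hq]
    congr 1
    field_simp
    ring

lemma ZMod.sum_Icc_one_natCast {M : Type*} [AddCommMonoid M] (n : ℕ) [NeZero n]
    (f : ZMod n → M) : ∑ i ∈ Icc 1 n, f i = ∑ a, f a := by
  have hinj : Set.InjOn (fun i : ℕ => (i : ZMod n)) (Icc 1 n) := by
    intro i hi j hj hij
    simp only [coe_Icc, Set.mem_Icc] at hi hj
    refine ((ZMod.natCast_eq_natCast_iff i j n).1 hij).eq_of_abs_lt ?_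
    rw [abs_lt]
    omega
  rw [← Finset.sum_image hinj, Finset.eq_univ_of_card (Icc 1 n |>.image _)]
  rw [card_image_of_injOn hinj, Nat.card_Icc, ZMod.card]
  omega

lemma intCast_add_half_div_mem_Icc_iff {n : ℕ} (hn : 0 < n) (M : ℤ) :
    ((M : ℝ) + 1 / 2) / n ∈ Set.Icc (0 : ℝ) 1 ↔ 0 ≤ M ∧ M < n := by
  have hn' : (0 : ℝ) < n := by exact_mod_cast hn
  rw [Set.mem_Icc, le_div_iff₀ hn', div_le_one hn', zero_mul]
  constructor
  · rintro ⟨h0, h1⟩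
    have h0' : (-1 : ℤ) < M := by exact_mod_cast (by linarith : (-1 : ℝ) < M)
    have h1' : M < n := by exact_mod_cast (by linarith : (M : ℝ) < n)
    exact ⟨by omega, h1'⟩
  · rintro ⟨h0, h1⟩
    have h0' : (0 : ℝ) ≤ M := by exact_mod_cast h0
    have h1' : (M : ℝ) + 1 ≤ n := by exact_mod_cast h1
    constructor <;> linarith

noncomputable def lhdPoint {d : ℕ} (n : ℕ) (v δ : Fin d → ℤ) (a : ZMod n) : Fin d → ℝ :=
  fun k => (((a * v k + δ k : ZMod n).val : ℝ) + 1 / 2) / n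

section lhdPoint

variable {d n : ℕ} (v δ : Fin d → ℤ)

lemma lhd_coord_eq_add_half_div (hn : (n : ℝ) ≠ 0) (z i w e : ℤ) :
    (z : ℝ) + i * w / n + e / n + 1 / (2 * n) = (((n * z + i * w + e : ℤ) : ℝ) + 1 / 2) / n := by
  push_cast
  field_simp

lemma LHDset_eq_range_lhdPoint [NeZero n] :
    LHDset d n v (fun k => (δ k : ℝ)) = Set.range (lhdPoint n v δ) := by
  have hn : 0 < n := Nat.pos_of_neZero n
  have hn' : (n : ℝ) ≠ 0 := by positivity
  ext x
  constructor
  · rintro ⟨⟨z, i, rfl⟩, hx⟩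
    refine ⟨i, funext fun k => ?_⟩
    specialize hx k
    simp only [lhd_coord_eq_add_half_div hn'] at hx ⊢
    obtain ⟨h0, h1⟩ := (intCast_add_half_div_mem_Icc_iff hn _).1 hx
    have hval : (((i : ZMod n) * v k + δ k : ZMod n).val : ℤ) = n * z k + i * v k + δ k := by
      rw [← Int.emod_eq_of_lt h0 h1, ← ZMod.val_intCast]
      push_cast
      simp
    simp only [lhdPoint, ← hval, Int.cast_natCast]
  · rintro ⟨a, rfl⟩
    refine ⟨⟨fun k => -((a.val * v k + δ k) / n), a.val, funext fun k => ?_⟩, fun k => ?_⟩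
    · have hval : ((a * v k + δ k : ZMod n).val : ℤ) = (a.val * v k + δ k) % n := by
        rw [← ZMod.val_intCast]
        push_cast
        simp
      rw [lhd_coord_eq_add_half_div hn', lhdPoint, ← Int.cast_natCast, hval, Int.emod_def]
      beta_reduce
      push_cast
      ring
    · have := (intCast_add_half_div_mem_Icc_iff hn ((a * v k + δ k : ZMod n).val)).2
        ⟨by positivity, by exact_mod_cast ZMod.val_lt _⟩
      simpa [lhdPoint] using this

lemma lhdPoint_injective [NeZero n] (k : Fin d) (hk : IsCoprime (v k) n) :
    Function.Injective (lhdPoint n v δ) := by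
  have hn : (n : ℝ) ≠ 0 := NeZero.ne _
  intro a b hab
  have hval := congrFun hab k
  simp only [lhdPoint, div_left_inj' hn, add_left_inj, Nat.cast_inj] at hval
  exact (ZMod.unitOfIsCoprime (v k) hk).isUnit.mul_right_cancel
    (add_right_cancel (ZMod.val_injective n hval))

end lhdPoint

noncomputable def lhdKernel {d : ℕ} (n : ℕ) (v : Fin d → ℤ) (c : ZMod n) : ℝ :=
  ∏ k, ((1.25 : ℝ) + nid ((c.val : ℝ) * v k / n - 1 / 2) ^ 2)

section lhdKernel

variable {d n : ℕ} (v δ : Fin d → ℤ)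

lemma prod_nid_natCast_eq_lhdKernel (i : ℕ) :
    ∏ k, ((1.25 : ℝ) + nid ((i : ℝ) * v k / n - 1 / 2) ^ 2) = lhdKernel n v i := by
  refine prod_congr rfl fun k _ => ?_
  have := nid_div_add_congr (n := n) (p := ((i : ZMod n).val : ℤ) * v k) (q := i * v k)
    (by push_cast; simp) (-(1 / 2))
  push_cast at this
  simp only [sub_eq_add_neg, this]

lemma prod_nid_lhdPoint_eq_lhdKernel [NeZero n] (a b : ZMod n) :
    ∏ k, ((1.25 : ℝ) + nid (lhdPoint n v δ a k - lhdPoint n v δ b k + 1 / 2) ^ 2)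
      = lhdKernel n v (a - b) := by
  have hn : (n : ℝ) ≠ 0 := NeZero.ne _
  refine prod_congr rfl fun k _ => ?_
  congr 2
  set A := (a * v k + δ k : ZMod n).val
  set B := (b * v k + δ k : ZMod n).val
  have hmod : (((A : ℤ) - B : ℤ) : ZMod n) = (((a - b).val : ℤ) * v k : ℤ) := by
    push_cast
    simp only [A, B, ZMod.natCast_zmod_val]
    ring
  calc nid (lhdPoint n v δ a k - lhdPoint n v δ b k + 1 / 2)
      = nid ((((A : ℤ) - B : ℤ) : ℝ) / n + 1 / 2) := by
        change nid (((A : ℝ) + 1 / 2) / n - ((B : ℝ) + 1 / 2) / n + 1 / 2) = _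
        push_cast
        congr 1
        field_simp
        ring
    _ = nid ((((a - b).val : ℤ) * v k : ℤ) / n + 1 / 2) := nid_div_add_congr hmod _
    _ = nid (((a - b).val : ℝ) * v k / n - 1 / 2) := by
        rw [← nid_add_intCast (_ - 1 / 2) 1]
        push_cast
        congr 1
        ring

end lhdKernel

lemma finsum_LHDset_eq {d n : ℕ} [NeZero n] (v δ : Fin d → ℤ) (j : Fin d)
    (hj : IsCoprime (v j) n) :
    ∑ᶠ x ∈ LHDset d n v (fun k => (δ k : ℝ)), ∑ᶠ y ∈ LHDset d n v (fun k => (δ k : ℝ)),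
        ∏ k, ((1.25 : ℝ) + nid (x k - y k + 1 / 2) ^ 2) = n * ∑ c, lhdKernel n v c := by
  simp only [LHDset_eq_range_lhdPoint, finsum_mem_range (lhdPoint_injective v δ j hj),
    finsum_eq_sum_of_fintype, prod_nid_lhdPoint_eq_lhdKernel]
  calc ∑ a, ∑ b, lhdKernel n v (a - b) = ∑ _a : ZMod n, ∑ c, lhdKernel n v c :=
        sum_congr rfl fun a _ => Fintype.sum_equiv (Equiv.subLeft a) _ _ fun _ => rfl
    _ = n * ∑ c, lhdKernel n v c := by simp [ZMod.card]

theorem stmt_6_general (d n : ℕ) (hd : 1 ≤ d) (v δ : Fin d → ℤ)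
    (hco : ∀ k, IsCoprime (v k) (n : ℤ))
    (S : Set (Fin d → ℝ)) (hS : S = LHDset d n v (fun k => (δ k : ℝ))) :
    (1 / (n : ℝ) ^ 2) * ∑ᶠ x ∈ S, ∑ᶠ y ∈ S,
        ∏ k, ((1.25 : ℝ) + nid (x k - y k + 1 / 2) ^ 2)
      = (1 / (n : ℝ)) * ∑ i ∈ Finset.Icc 1 n,
          ∏ k, ((1.25 : ℝ) + nid ((i : ℝ) * (v k : ℝ) / n - 1 / 2) ^ 2) ∧
    (1 / (n : ℝ) ^ 2) * (∑ᶠ x ∈ S, ∑ᶠ y ∈ S,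
        ∏ k, ((1.25 : ℝ) + nid (x k - y k + 1 / 2) ^ 2)) - (4 / 3 : ℝ) ^ d
      = (1 / (n : ℝ)) * (∑ i ∈ Finset.Icc 1 n,
          ∏ k, ((1.25 : ℝ) + nid ((i : ℝ) * (v k : ℝ) / n - 1 / 2) ^ 2)) - (4 / 3 : ℝ) ^ d := by
  rcases Nat.eq_zero_or_pos n with rfl | hn
  · simp -- for `n = 0` both sides vanish, since `1 / 0 = 0` in `ℝ`
  have : NeZero n := ⟨hn.ne'⟩
  rw [hS, finsum_LHDset_eq v δ ⟨0, hd⟩ (hco _)]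
  simp only [prod_nid_natCast_eq_lhdKernel, ZMod.sum_Icc_one_natCast]
  have hscale : 1 / (n : ℝ) ^ 2 * (n * ∑ c, lhdKernel n v c) = 1 / n * ∑ c, lhdKernel n v c := by
    field_simp
  exact ⟨hscale, by rw [hscale]⟩

/-- the double-sum formula for the wrap-around discrepancy of L(n,v,δ)
reduces to a single sum over i = 1,…,n; consequently
c_WD(L(n,v,δ))² = (1/n)·Σ_{i=1}^{n} Π_k (1.25 + w(i·v_k/n − 1/2)²) − (4/3)^d. -/
theorem stmt_6 (d n : ℕ) (hd : 1 ≤ d) (hn : 1 ≤ n) (v δ : Fin d → ℤ)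
    (hco : ∀ k, IsCoprime (v k) (n : ℤ))
    (S : Set (Fin d → ℝ)) (hS : S = LHDset d n v (fun k => (δ k : ℝ))) :
    (1 / (n : ℝ) ^ 2) * ∑ᶠ x ∈ S, ∑ᶠ y ∈ S,
        ∏ k, ((1.25 : ℝ) + nid (x k - y k + 1 / 2) ^ 2)
      = (1 / (n : ℝ)) * ∑ i ∈ Finset.Icc 1 n,
          ∏ k, ((1.25 : ℝ) + nid ((i : ℝ) * (v k : ℝ) / n - 1 / 2) ^ 2) ∧
    (1 / (n : ℝ) ^ 2) * (∑ᶠ x ∈ S, ∑ᶠ y ∈ S,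
        ∏ k, ((1.25 : ℝ) + nid (x k - y k + 1 / 2) ^ 2)) - (4 / 3 : ℝ) ^ d
      = (1 / (n : ℝ)) * (∑ i ∈ Finset.Icc 1 n,
          ∏ k, ((1.25 : ℝ) + nid ((i : ℝ) * (v k : ℝ) / n - 1 / 2) ^ 2)) - (4 / 3 : ℝ) ^ d :=
  stmt_6_general d n hd v δ hco S hS
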